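/- Jacobian of a congruence transformation on symmetric matrices: if Y = A X Aᵀ + C where X, Y are real symmetric m×m matrices, A ∈ ℝ^{m×m} is invertible, and C is a constant symmetric matrix, then (dY) = |det A|^{m+1} (dX); i.e., the linear map X ↦ A X Aᵀ on the space of symmetric m×m matrices has determinant of absolute value |det A|^{m+1}. -/

import Mathlib

open MeasureTheory Matrix

/-- A symmetric matrix built from its `m(m+1)/2` independent (upper-triangular) entries. -/
noncomputable def sym (m : ℕ) (v : {p : Fin m × Fin m // p.1 ≤ p.2} → ℝ) :
    Matrix (Fin m) (Fin m) ℝ :=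
  fun i j => if h : i ≤ j then v ⟨(i, j), h⟩ else v ⟨(j, i), le_of_not_ge h⟩

lemma sym_add (m : ℕ) (v w : {p : Fin m × Fin m // p.1 ≤ p.2} → ℝ) :
    sym m (v + w) = sym m v + sym m w := by
  funext i j; by_cases h : i ≤ j <;> simp [sym, h]

lemma sym_smul (m : ℕ) (c : ℝ) (v : {p : Fin m × Fin m // p.1 ≤ p.2} → ℝ) :
    sym m (c • v) = c • sym m v := by
  funext i j; by_cases h : i ≤ j <;> simp [sym, h]

/-- The congruence transformation `X ↦ A * X * Aᵀ` on symmetric `m × m` matrices,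
expressed in the coordinates given by the `m(m+1)/2` independent entries. -/
noncomputable def congrSymMap (m : ℕ) (A : Matrix (Fin m) (Fin m) ℝ) :
    ({p : Fin m × Fin m // p.1 ≤ p.2} → ℝ) →ₗ[ℝ] ({p : Fin m × Fin m // p.1 ≤ p.2} → ℝ) where
  toFun v := fun p => (A * sym m v * Aᵀ) p.1.1 p.1.2
  map_add' v w := by
    funext p; simp [sym_add, Matrix.mul_add, Matrix.add_mul]
  map_smul' c v := by
    funext p; simp [sym_smul, Matrix.mul_smul, Matrix.smul_mul]

lemma sym_symm (m : ℕ) (v : {p : Fin m × Fin m // p.1 ≤ p.2} → ℝ) (i j : Fin m) :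
    sym m v j i = sym m v i j := by
  rcases le_or_gt i j with h | h
  · rcases le_or_gt j i with h' | h'
    · obtain rfl : i = j := le_antisymm h h'
      rfl
    · simp [sym, h, not_le.2 h']
  · simp [sym, not_le.2 h, h.le]

lemma sym_entries (m : ℕ) (M : Matrix (Fin m) (Fin m) ℝ) (hM : ∀ i j, M j i = M i j) :
    sym m (fun p => M p.1.1 p.1.2) = M := by
  funext i j
  by_cases h : i ≤ j
  · simp [sym, h]
  · simp [sym, h, hM]

lemma congrSymMap_mul (m : ℕ) (A B : Matrix (Fin m) (Fin m) ℝ) :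
    congrSymMap m (A * B) = (congrSymMap m A).comp (congrSymMap m B) := by
  refine LinearMap.ext fun v => funext fun p => ?_
  have hsymm : ∀ i j, (B * sym m v * Bᵀ) j i = (B * sym m v * Bᵀ) i j := by
    intro i j
    have : (B * sym m v * Bᵀ)ᵀ = B * sym m v * Bᵀ := by
      have hs : (sym m v)ᵀ = sym m v := by
        funext i j; exact sym_symm m v i j
      rw [Matrix.transpose_mul, Matrix.transpose_mul, transpose_transpose, hs, Matrix.mul_assoc]
    conv_lhs => rw [← this]
    rfl
  show ((A * B) * sym m v * (A * B)ᵀ) p.1.1 p.1.2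
      = (A * sym m (fun q => (B * sym m v * Bᵀ) q.1.1 q.1.2) * Aᵀ) p.1.1 p.1.2
  rw [sym_entries m _ hsymm, Matrix.transpose_mul]
  rw [show A * B * sym m v * (Bᵀ * Aᵀ) = A * (B * sym m v * Bᵀ) * Aᵀ by
    simp only [Matrix.mul_assoc]]

lemma congrSymMap_one (m : ℕ) : congrSymMap m 1 = LinearMap.id := by
  refine LinearMap.ext fun v => funext fun p => ?_
  show ((1 : Matrix (Fin m) (Fin m) ℝ) * sym m v * (1 : Matrix (Fin m) (Fin m) ℝ)ᵀ) p.1.1 p.1.2 = v p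
  simp [sym, p.2]

lemma congrSymMap_diagonal_toMatrix (m : ℕ) (D : Fin m → ℝ) :
    LinearMap.toMatrix (Pi.basisFun ℝ _) (Pi.basisFun ℝ _) (congrSymMap m (diagonal D))
      = Matrix.diagonal (fun p : {p : Fin m × Fin m // p.1 ≤ p.2} => D p.1.1 * D p.1.2) := by
  ext q p
  rw [LinearMap.toMatrix_apply]
  show (diagonal D * sym m (Pi.basisFun ℝ _ p) * (diagonal D)ᵀ) q.1.1 q.1.2 = _
  rw [diagonal_transpose, mul_diagonal, diagonal_mul]
  have : sym m (Pi.basisFun ℝ _ p) q.1.1 q.1.2 = (Pi.single p 1 : {p : Fin m × Fin m // p.1 ≤ p.2} → ℝ) q := by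
    simp only [Pi.basisFun_apply, sym, dif_pos q.2]
  rw [this]
  by_cases h : q = p <;> simp [Pi.single_apply, diagonal_apply, h]

lemma det_congrSymMap_diagonal (m : ℕ) (D : Fin m → ℝ) :
    |LinearMap.det (congrSymMap m (diagonal D))| = |Matrix.det (diagonal D)| ^ (m + 1) := by
  have hdet : LinearMap.det (congrSymMap m (diagonal D))
      = ∏ p : {p : Fin m × Fin m // p.1 ≤ p.2}, (D p.1.1 * D p.1.2) := by
    rw [← LinearMap.det_toMatrix (Pi.basisFun ℝ _), congrSymMap_diagonal_toMatrix, det_diagonal]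
  rw [hdet, det_diagonal]
  -- product identity, via squares
  set d : ℝ := ∏ i, D i with hd
  set P : ℝ := ∏ p : {p : Fin m × Fin m // p.1 ≤ p.2}, (D p.1.1 * D p.1.2) with hP
  have key : P * P = d ^ (2 * (m + 1)) := by
    have h1 : P = ∏ p ∈ Finset.univ.filter (fun p : Fin m × Fin m => p.1 ≤ p.2),
        (D p.1 * D p.2) :=
      (Finset.prod_subtype _ (fun x => by simp) (fun p : Fin m × Fin m => D p.1 * D p.2)).symm
    have h2 : (∏ p ∈ Finset.univ.filter (fun p : Fin m × Fin m => p.2 ≤ p.1),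
        (D p.1 * D p.2)) = P := by
      rw [h1]
      apply Finset.prod_nbij (fun p => (p.2, p.1))
      · intro a ha; simp at ha ⊢; exact ha
      · intro a ha b hb hab; simp at hab; exact Prod.ext hab.2 hab.1
      · intro b hb; exact ⟨(b.2, b.1), by simpa using hb, rfl⟩
      · intro a ha; ring
    have hunion : (Finset.univ.filter (fun p : Fin m × Fin m => p.1 ≤ p.2)) ∪
        (Finset.univ.filter (fun p : Fin m × Fin m => p.2 ≤ p.1)) = Finset.univ := by
      ext p; simp [le_total]
    have hinter : (Finset.univ.filter (fun p : Fin m × Fin m => p.1 ≤ p.2)) ∩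
        (Finset.univ.filter (fun p : Fin m × Fin m => p.2 ≤ p.1))
        = Finset.univ.filter (fun p : Fin m × Fin m => p.1 = p.2) := by
      ext p; simp [le_antisymm_iff]
    have := Finset.prod_union_inter (s₁ := Finset.univ.filter (fun p : Fin m × Fin m => p.1 ≤ p.2))
      (s₂ := Finset.univ.filter (fun p : Fin m × Fin m => p.2 ≤ p.1))
      (f := fun p : Fin m × Fin m => D p.1 * D p.2)
    rw [hunion, hinter] at this
    have hall : (∏ p : Fin m × Fin m, (D p.1 * D p.2)) = d ^ m * d ^ m := by
      rw [Fintype.prod_prod_type]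
      have hin : ∀ i, (∏ j, (D i * D j)) = D i ^ m * d := by
        intro i
        rw [Finset.prod_mul_distrib, Finset.prod_const, Finset.card_univ, Fintype.card_fin, hd]
      simp_rw [hin]
      rw [Finset.prod_mul_distrib, Finset.prod_const, Finset.prod_pow, Finset.card_univ,
        Fintype.card_fin, hd]
    have hdiag : (∏ p ∈ Finset.univ.filter (fun p : Fin m × Fin m => p.1 = p.2),
        (D p.1 * D p.2)) = d * d := by
      rw [show (Finset.univ.filter (fun p : Fin m × Fin m => p.1 = p.2))
          = Finset.univ.image (fun i : Fin m => (i, i)) by ext p; aesop]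
      rw [Finset.prod_image (by intro a _ b _ h; simpa using congrArg Prod.fst h)]
      rw [Finset.prod_mul_distrib]
    calc P * P = (∏ p ∈ Finset.univ.filter (fun p : Fin m × Fin m => p.1 ≤ p.2), (D p.1 * D p.2))
          * (∏ p ∈ Finset.univ.filter (fun p : Fin m × Fin m => p.2 ≤ p.1), (D p.1 * D p.2)) := by
            rw [h1, h2, h1]
      _ = (∏ p : Fin m × Fin m, (D p.1 * D p.2)) *
          (∏ p ∈ Finset.univ.filter (fun p : Fin m × Fin m => p.1 = p.2), (D p.1 * D p.2)) := this.symm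
      _ = d ^ m * d ^ m * (d * d) := by rw [hall, hdiag]
      _ = d ^ (2 * (m + 1)) := by ring
  have habs : |P| * |P| = |d| ^ (m + 1) * |d| ^ (m + 1) := by
    rw [← abs_mul, key, abs_pow]; ring
  have h1 := abs_nonneg P
  have h2 : (0:ℝ) ≤ |d| ^ (m + 1) := pow_nonneg (abs_nonneg d) _
  nlinarith [habs, h1, h2, sq_nonneg (|P| - |d| ^ (m+1)), sq_nonneg (|P| + |d| ^ (m+1))]

lemma det_congrSymMap_mul (m : ℕ) (A B : Matrix (Fin m) (Fin m) ℝ) :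
    LinearMap.det (congrSymMap m (A * B))
      = LinearMap.det (congrSymMap m A) * LinearMap.det (congrSymMap m B) := by
  rw [congrSymMap_mul, LinearMap.det_comp]

lemma det_congrSymMap_one (m : ℕ) : LinearMap.det (congrSymMap m 1) = 1 := by
  rw [congrSymMap_one, LinearMap.det_id]

lemma conj_transvection (m : ℕ) (i j : Fin m) (hij : i ≠ j) (c : ℝ) (hc : c ≠ 0) :
    diagonal (fun k => if k = i then c else 1) * Matrix.transvection i j 1 *
      diagonal (fun k => if k = i then c⁻¹ else 1) = Matrix.transvection i j c := by
  have hE : diagonal (fun k => if k = i then c else 1) * Matrix.single i j (1:ℝ) *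
      diagonal (fun k => if k = i then c⁻¹ else 1) = Matrix.single i j c := by
    ext a b
    rw [mul_diagonal, diagonal_mul]
    by_cases ha : a = i <;> by_cases hb : b = j <;>
      simp [ha, hb, Matrix.single, hij, (Ne.symm hij)] <;>
      aesop
  have hDD : diagonal (fun k => if k = i then c else 1) *
      diagonal (fun k => if k = i then c⁻¹ else 1) = 1 := by
    rw [diagonal_mul_diagonal]
    have h : (fun k => (if k = i then c else 1) * if k = i then c⁻¹ else 1) = fun _ => (1:ℝ) := by
      funext k; by_cases hk : k = i <;> simp [hk, mul_inv_cancel₀ hc]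
    rw [h, diagonal_one]
  rw [Matrix.transvection, Matrix.transvection, Matrix.mul_add, Matrix.add_mul, Matrix.mul_one,
    hDD, hE]

lemma diag_mul_diag_inv (m : ℕ) (i : Fin m) (c : ℝ) (hc : c ≠ 0) :
    (diagonal (fun k => if k = i then c else 1) : Matrix (Fin m) (Fin m) ℝ) *
      diagonal (fun k => if k = i then c⁻¹ else 1) = 1 := by
  rw [diagonal_mul_diagonal]
  have h : (fun k => (if k = i then c else 1) * if k = i then c⁻¹ else 1) = fun _ => (1:ℝ) := by
    funext k; by_cases hk : k = i <;> simp [hk, mul_inv_cancel₀ hc]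
  rw [h, diagonal_one]

lemma det_congrSymMap_transvection (m : ℕ) (i j : Fin m) (hij : i ≠ j) (c : ℝ) :
    LinearMap.det (congrSymMap m (Matrix.transvection i j c)) = 1 := by
  set f : Matrix (Fin m) (Fin m) ℝ → ℝ := fun X => LinearMap.det (congrSymMap m X) with hf
  have hfmul : ∀ X Y, f (X * Y) = f X * f Y := fun X Y => det_congrSymMap_mul m X Y
  have hf1 : f 1 = 1 := det_congrSymMap_one m
  have hconj : ∀ e : ℝ, e ≠ 0 → f (Matrix.transvection i j e) = f (Matrix.transvection i j 1) := by
    intro e he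
    rw [← conj_transvection m i j hij e he, hfmul, hfmul]
    have : f (diagonal (fun k => if k = i then e else 1)) *
        f (diagonal (fun k => if k = i then e⁻¹ else 1)) = 1 := by
      rw [← hfmul, diag_mul_diag_inv m i e he, hf1]
    calc f (diagonal fun k => if k = i then e else 1) * f (Matrix.transvection i j 1) *
          f (diagonal fun k => if k = i then e⁻¹ else 1)
        = f (Matrix.transvection i j 1) * (f (diagonal fun k => if k = i then e else 1) *
          f (diagonal fun k => if k = i then e⁻¹ else 1)) := by ring
      _ = f (Matrix.transvection i j 1) := by rw [this, mul_one]
  set k : ℝ := f (Matrix.transvection i j 1) with hk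
  have hsq : k * k = k := by
    have h1 : Matrix.transvection i j (1:ℝ) * Matrix.transvection i j (1:ℝ)
        = Matrix.transvection i j (2:ℝ) := by
      rw [Matrix.transvection_mul_transvection_same (i := i) (j := j) hij]; norm_num
    have := hfmul _ _ |>.symm.trans (congrArg f h1)
    rw [this.symm] at *
    rw [← hk] at *
    calc k * k = f (Matrix.transvection i j (2:ℝ)) := by rw [← h1, hfmul]
      _ = k := hconj 2 two_ne_zero
  have hne : k ≠ 0 := by
    intro h0
    have h1 : Matrix.transvection i j (1:ℝ) * Matrix.transvection i j (-1:ℝ) = 1 := by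
      rw [Matrix.transvection_mul_transvection_same (i := i) (j := j) hij]; norm_num
    have := hfmul (Matrix.transvection i j (1:ℝ)) (Matrix.transvection i j (-1:ℝ))
    rw [h1, hf1, ← hk, h0, zero_mul] at this
    exact one_ne_zero this
  have hk1 : k = 1 := mul_left_cancel₀ hne (by rw [mul_one, hsq])
  show f (Matrix.transvection i j c) = 1
  rcases eq_or_ne c 0 with rfl | hc
  · rw [Matrix.transvection_zero]; exact hf1
  · rw [hconj c hc, hk1]

theorem jacobian_congruence_transformation (m : ℕ)
    (A : Matrix (Fin m) (Fin m) ℝ) (hA : IsUnit A.det) :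
    |LinearMap.det (congrSymMap m A)| = |A.det| ^ (m + 1) := by
  clear hA
  induction A using Matrix.diagonal_transvection_induction with
  | hdiag D hD => exact det_congrSymMap_diagonal m D
  | htransvec t =>
    have ht : t.toMatrix = Matrix.transvection t.i t.j t.c := rfl
    rw [ht, det_congrSymMap_transvection m t.i t.j t.hij t.c,
      Matrix.det_transvection_of_ne _ _ t.hij]
    simp
  | hmul X Y hX hY =>
    rw [det_congrSymMap_mul, Matrix.det_mul, abs_mul, abs_mul, mul_pow, hX, hY]
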